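/- For integers m ≥ n ≥ 3, the radio number of the Cartesian product of the stars K_{1,m} and K_{1,n} is rn(K_{1,m} □ K_{1,n}) = mn + 3(m + n) + 1. -/

import Mathlib

open SimpleGraph Finset

/-- The weight of a graph at a vertex: the sum of the distances to all vertices. -/
noncomputable def gWeight {V : Type*} [Fintype V] (G : SimpleGraph V) (v : V) : ℕ :=
  ∑ u, G.dist u v

/-- A vertex is a weight center if its weight is minimum among all vertices. -/
def IsWeightCenter {V : Type*} [Fintype V] (G : SimpleGraph V) (v : V) : Prop :=
  ∀ u, gWeight G v ≤ gWeight G u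

/-- The level of a vertex: the minimum distance to a weight center. -/
noncomputable def level {V : Type*} [Fintype V] (G : SimpleGraph V) (u : V) : ℕ :=
  sInf {d | ∃ w, IsWeightCenter G w ∧ d = G.dist u w}

/-- The total level of a graph: the sum of the levels of all vertices. -/
noncomputable def totalLevel {V : Type*} [Fintype V] (G : SimpleGraph V) : ℕ :=
  ∑ u, level G u

/-- The diameter: the maximum distance between two vertices. -/
noncomputable def graphDiam {V : Type*} [Fintype V] (G : SimpleGraph V) : ℕ :=
  Finset.univ.sup fun p : V × V => G.dist p.1 p.2

/-- A radio labeling: |f u - f v| ≥ diam + 1 - d(u,v) for all distinct u, v. -/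
def IsRadioLabeling {V : Type*} [Fintype V] (G : SimpleGraph V) (f : V → ℕ) : Prop :=
  ∀ u v : V, u ≠ v → (graphDiam G : ℤ) + 1 - G.dist u v ≤ |(f u : ℤ) - (f v : ℤ)|

/-- The span of a labeling: the maximum difference between two labels. -/
noncomputable def radioSpan {V : Type*} [Fintype V] (f : V → ℕ) : ℕ :=
  Finset.univ.sup fun p : V × V => ((f p.1 : ℤ) - (f p.2 : ℤ)).natAbs

/-- The radio number: the minimum span of a radio labeling. -/
noncomputable def radioNumber {V : Type*} [Fintype V] (G : SimpleGraph V) : ℕ :=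
  sInf {s | ∃ f : V → ℕ, IsRadioLabeling G f ∧ s = radioSpan f}

/-- The star K_{1,n}, with center vertex 0 adjacent to n leaves. -/
def starGraphK (n : ℕ) : SimpleGraph (Fin (n + 1)) where
  Adj x y := x ≠ y ∧ (x = 0 ∨ y = 0)
  symm := ⟨fun _ _ h => ⟨h.1.symm, h.2.symm⟩⟩
  loopless := ⟨fun _ h => h.1 rfl⟩

open Classical in
/-- δ(x,x') = 1 if x and x' lie in different connected components of the graph
obtained by deleting the edge ww', and 0 otherwise. -/
noncomputable def deltaEdge {V : Type*} (T : SimpleGraph V) (w w' x x' : V) : ℕ :=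
  if (T.deleteEdges {s(w, w')}).connectedComponentMk x =
      (T.deleteEdges {s(w, w')}).connectedComponentMk x' then 0 else 1


section RadioAux


lemma star_connected (N : ℕ) : (starGraphK N).Connected := by
  rw [connected_iff]
  refine ⟨fun x y => ?_, ⟨0⟩⟩
  have h0 : ∀ x : Fin (N+1), (starGraphK N).Reachable x 0 := by
    intro x
    by_cases hx : x = 0
    · rw [hx]
    · exact Adj.reachable ⟨hx, Or.inr rfl⟩
  exact (h0 x).trans (h0 y).symm

lemma star_dist (N : ℕ) (x y : Fin (N+1)) :
    (starGraphK N).dist x y = if x = y then 0 else if x = 0 ∨ y = 0 then 1 else 2 := by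
  split_ifs with h1 h2
  · subst h1; exact SimpleGraph.dist_self
  · exact SimpleGraph.dist_eq_one_iff_adj.2 ⟨h1, h2⟩
  · push_neg at h2
    have hadj1 : (starGraphK N).Adj x 0 := ⟨h2.1, Or.inr rfl⟩
    have hadj2 : (starGraphK N).Adj 0 y := ⟨fun h => h2.2 h.symm, Or.inl rfl⟩
    have hle : (starGraphK N).dist x y ≤ 2 := by
      have := SimpleGraph.dist_le (Walk.cons hadj1 (Walk.cons hadj2 Walk.nil))
      simpa using this
    have h0 : (starGraphK N).dist x y ≠ 0 := by
      intro h
      exact h1 ((star_connected N).dist_eq_zero_iff.1 h)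
    have h1' : (starGraphK N).dist x y ≠ 1 := by
      intro h
      rcases SimpleGraph.dist_eq_one_iff_adj.1 h with ⟨-, h | h⟩
      exacts [h2.1 h, h2.2 h]
    omega


variable {α β : Type*} {G : SimpleGraph α} {H : SimpleGraph β}

lemma boxProd_walk_le (hG : G.Connected) (hH : H.Connected) {x y : α × β}
    (w : (G □ H).Walk x y) : G.dist x.1 y.1 + H.dist x.2 y.2 ≤ w.length := by
  induction w with
  | nil => simp
  | @cons a b c h p ih =>
      rw [Walk.length_cons]
      rcases h with ⟨h1, h2⟩ | ⟨h1, h2⟩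
      · have ht : G.dist a.1 c.1 ≤ 1 + G.dist b.1 c.1 := by
          have := hG.dist_triangle (u := a.1) (v := b.1) (w := c.1)
          rwa [SimpleGraph.dist_eq_one_iff_adj.2 h1] at this
        have : H.dist a.2 c.2 = H.dist b.2 c.2 := by rw [h2]
        omega
      · have ht : H.dist a.2 c.2 ≤ 1 + H.dist b.2 c.2 := by
          have := hH.dist_triangle (u := a.2) (v := b.2) (w := c.2)
          rwa [SimpleGraph.dist_eq_one_iff_adj.2 h1] at this
        have : G.dist a.1 c.1 = G.dist b.1 c.1 := by rw [h2]
        omega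

lemma boxProd_dist (hG : G.Connected) (hH : H.Connected) (x y : α × β) :
    (G □ H).dist x y = G.dist x.1 y.1 + H.dist x.2 y.2 := by
  obtain ⟨x1, x2⟩ := x
  obtain ⟨y1, y2⟩ := y
  apply le_antisymm
  · obtain ⟨w1, hw1⟩ := hG.exists_walk_length_eq_dist x1 y1
    obtain ⟨w2, hw2⟩ := hH.exists_walk_length_eq_dist x2 y2
    have hd := SimpleGraph.dist_le ((w1.boxProdLeft H x2).append (Walk.boxProdRight G y1 w2))
    have e1 : (w1.boxProdLeft H x2).length = w1.length := Walk.length_map _ _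
    have e2 : (Walk.boxProdRight G y1 w2).length = w2.length := Walk.length_map _ _
    rwa [Walk.length_append, e1, e2, hw1, hw2] at hd
  · obtain ⟨w, hw⟩ := (hG.boxProd hH).exists_walk_length_eq_dist (x1, x2) (y1, y2)
    rw [← hw]
    exact boxProd_walk_le hG hH w
lemma radio_lower {V : Type*} [Fintype V] (G : SimpleGraph V) (hconn : G.Connected)
    (hV : 2 ≤ Fintype.card V) (z : V) (f : V → ℕ) (hf : IsRadioLabeling G f) :
    (graphDiam G + 1) * (Fintype.card V - 1) + 1 ≤ radioSpan f + 2 * ∑ u, G.dist u z := by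
  classical
  set D := graphDiam G with hD
  set p := Fintype.card V with hp
  -- injectivity
  have hdle : ∀ u v : V, G.dist u v ≤ D :=
    fun u v => Finset.le_sup (f := fun q : V × V => G.dist q.1 q.2) (mem_univ (u, v))
  have hinj : Function.Injective f := by
    intro a b hab
    by_contra hne
    have h1 := hf a b hne
    have h2 := hdle a b
    rw [hab] at h1
    simp only [sub_self, abs_zero] at h1
    have : (G.dist a b : ℤ) ≤ D := by exact_mod_cast h2
    omega
  letI : LinearOrder V := LinearOrder.lift' f hinj
  let e : Fin p ≃o V := monoEquivOfFin V rfl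
  have hmono : ∀ i j : Fin p, i < j → f (e i) < f (e j) := by
    intro i j hij
    have h1 : (e i : V) < e j := e.strictMono hij
    have h2 : f (e i) ≤ f (e j) := le_of_lt h1
    have h3 : f (e i) ≠ f (e j) := fun h => (ne_of_lt h1) (hinj h)
    omega
  have hp1 : 1 ≤ p - 1 := by omega
  let vv : ℕ → V := fun k => e ⟨min k (p-1), by omega⟩
  have hvv : ∀ k, (hk : k ≤ p - 1) → vv k = e ⟨k, by omega⟩ := by
    intro k hk
    simp only [vv, min_eq_left hk]
  have hinje : ∀ k l, k ≤ p - 1 → l ≤ p - 1 → vv k = vv l → k = l := by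
    intro k l hk hl h
    rw [hvv k hk, hvv l hl] at h
    have := e.injective h
    simpa [Fin.ext_iff] using this
  have hstep : ∀ i, i < p - 1 →
      (D : ℤ) + 1 - (G.dist (vv i) z + G.dist (vv (i+1)) z) ≤
        (f (vv (i+1)) : ℤ) - f (vv i) := by
    intro i hi
    have hne : vv i ≠ vv (i+1) := fun h => by
      have := hinje i (i+1) (by omega) (by omega) h
      omega
    have h1 := hf _ _ hne
    have hlt : f (vv i) < f (vv (i+1)) := by
      rw [hvv i (by omega), hvv (i+1) (by omega)]
      exact hmono _ _ (by simp [Fin.lt_def])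
    have habs : |(f (vv i) : ℤ) - f (vv (i+1))| = (f (vv (i+1)) : ℤ) - f (vv i) := by
      rw [abs_sub_comm, abs_of_nonneg]
      have : (f (vv i) : ℤ) ≤ f (vv (i+1)) := by exact_mod_cast hlt.le
      omega
    rw [habs] at h1
    have htri : G.dist (vv i) (vv (i+1)) ≤ G.dist (vv i) z + G.dist (vv (i+1)) z := by
      have h2 := hconn.dist_triangle (u := vv i) (v := z) (w := vv (i+1))
      have h3 : G.dist z (vv (i+1)) = G.dist (vv (i+1)) z :=
        SimpleGraph.dist_comm (u := z) (v := vv (i+1))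
      omega
    have : (G.dist (vv i) (vv (i+1)) : ℤ) ≤ (G.dist (vv i) z : ℤ) + G.dist (vv (i+1)) z := by
      exact_mod_cast htri
    omega
  -- telescoping
  have htel : ∑ i ∈ Finset.range (p-1), ((f (vv (i+1)) : ℤ) - f (vv i)) =
      (f (vv (p-1)) : ℤ) - f (vv 0) :=
    Finset.sum_range_sub (fun k => (f (vv k) : ℤ)) (p-1)
  have hsumle : ∑ i ∈ Finset.range (p-1),
      ((D : ℤ) + 1 - (G.dist (vv i) z + G.dist (vv (i+1)) z)) ≤
      (f (vv (p-1)) : ℤ) - f (vv 0) := by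
    rw [← htel]
    exact Finset.sum_le_sum fun i hi => hstep i (Finset.mem_range.1 hi)
  -- total sum over all vertices
  have hS0 : ∑ i ∈ Finset.range p, (G.dist (vv i) z : ℤ) = ∑ u, (G.dist u z : ℤ) := by
    rw [← Fin.sum_univ_eq_sum_range]
    rw [← Equiv.sum_comp e.toEquiv (fun u => (G.dist u z : ℤ))]
    apply Finset.sum_congr rfl
    intro i _
    congr 1
    rw [hvv i (by omega)]
    congr 1
  have hpr : (p-1) + 1 = p := by omega
  have hsplit1 : ∑ i ∈ Finset.range (p-1), (G.dist (vv i) z : ℤ) =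
      (∑ u, (G.dist u z : ℤ)) - G.dist (vv (p-1)) z := by
    have h1 := Finset.sum_range_succ (fun i => (G.dist (vv i) z : ℤ)) (p-1)
    rw [hpr] at h1
    rw [hS0] at h1
    linarith
  have hsplit2 : ∑ i ∈ Finset.range (p-1), (G.dist (vv (i+1)) z : ℤ) =
      (∑ u, (G.dist u z : ℤ)) - G.dist (vv 0) z := by
    have h1 := Finset.sum_range_succ' (fun i => (G.dist (vv i) z : ℤ)) (p-1)
    rw [hpr] at h1
    rw [hS0] at h1
    linarith
  have hsum : ∑ i ∈ Finset.range (p-1),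
      ((D : ℤ) + 1 - (G.dist (vv i) z + G.dist (vv (i+1)) z)) =
      (p-1 : ℕ) * ((D : ℤ) + 1) - (∑ i ∈ Finset.range (p-1), (G.dist (vv i) z : ℤ))
        - ∑ i ∈ Finset.range (p-1), (G.dist (vv (i+1)) z : ℤ) := by
    have e3 : ∑ i ∈ Finset.range (p-1),
        ((D : ℤ) + 1 - (G.dist (vv i) z + G.dist (vv (i+1)) z)) =
        (∑ _i ∈ Finset.range (p-1), ((D : ℤ) + 1)) -
          ∑ i ∈ Finset.range (p-1), ((G.dist (vv i) z : ℤ) + (G.dist (vv (i+1)) z : ℤ)) :=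
      Finset.sum_sub_distrib _ _
    have e1 : ∑ _i ∈ Finset.range (p-1), ((D : ℤ) + 1) = ((p-1 : ℕ) : ℤ) * ((D : ℤ) + 1) := by
      rw [Finset.sum_const, Finset.card_range, nsmul_eq_mul]
    have e2 : ∑ i ∈ Finset.range (p-1),
        ((G.dist (vv i) z : ℤ) + (G.dist (vv (i+1)) z : ℤ)) =
        (∑ i ∈ Finset.range (p-1), (G.dist (vv i) z : ℤ)) +
          ∑ i ∈ Finset.range (p-1), (G.dist (vv (i+1)) z : ℤ) := Finset.sum_add_distrib
    rw [e3, e1, e2]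
    ring
  -- endpoints
  have hend : 1 ≤ G.dist (vv 0) z + G.dist (vv (p-1)) z := by
    by_contra h
    push_neg at h
    have h0 : G.dist (vv 0) z = 0 := by omega
    have h1 : G.dist (vv (p-1)) z = 0 := by omega
    have e0 : vv 0 = z := hconn.dist_eq_zero_iff.1 h0
    have e1 : vv (p-1) = z := hconn.dist_eq_zero_iff.1 h1
    have := hinje 0 (p-1) (by omega) (by omega) (e0.trans e1.symm)
    omega
  -- span bound
  have hspan : (f (vv (p-1)) : ℤ) - f (vv 0) ≤ radioSpan f := by
    have h1 : ((f (vv (p-1)) : ℤ) - f (vv 0)).natAbs ≤ radioSpan f :=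
      Finset.le_sup (f := fun q : V × V => ((f q.1 : ℤ) - (f q.2 : ℤ)).natAbs)
        (mem_univ (vv (p-1), vv 0))
    calc (f (vv (p-1)) : ℤ) - f (vv 0) ≤ ((f (vv (p-1)) : ℤ) - f (vv 0)).natAbs :=
          Int.le_natAbs
      _ ≤ radioSpan f := by exact_mod_cast h1
  -- combine
  have key : ((p : ℤ) - 1) * ((D : ℤ) + 1) + 1 ≤
      (radioSpan f : ℤ) + 2 * ∑ u, (G.dist u z : ℤ) := by
    rw [hsum, hsplit1, hsplit2] at hsumle
    have hd0 : (G.dist (vv 0) z : ℤ) + G.dist (vv (p-1)) z ≥ 1 := by exact_mod_cast hend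
    have hc : ((p - 1 : ℕ) : ℤ) = (p : ℤ) - 1 := by
      have : 1 ≤ p := by omega
      omega
    rw [hc] at hsumle
    linarith
  have hcast : (∑ u, (G.dist u z : ℤ)) = ((∑ u, G.dist u z : ℕ) : ℤ) := by push_cast; ring
  rw [hcast] at key
  have h2 : ((D + 1) * (p - 1) + 1 : ℤ) ≤
      (radioSpan f : ℤ) + 2 * ((∑ u, G.dist u z : ℕ) : ℤ) := by
    nlinarith [key]
  have h3 : ((D + 1) * (p - 1) + 1 : ℕ) ≤ radioSpan f + 2 * ∑ u, G.dist u z := by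
    have hc : (((p : ℕ) - 1 : ℕ) : ℤ) = (p : ℤ) - 1 := by
      have : 1 ≤ p := by omega
      push_cast [Nat.cast_sub this]
      ring
    have h4 : (((D + 1) * (p - 1) + 1 : ℕ) : ℤ) ≤
        ((radioSpan f + 2 * ∑ u, G.dist u z : ℕ) : ℤ) := by
      push_cast [hc]
      push_cast at h2
      linarith
    exact_mod_cast h4
  exact h3


/-- star distance pattern on ℕ indices -/
def sd (x y : ℕ) : ℕ := if x = y then 0 else if x = 0 ∨ y = 0 then 1 else 2

lemma sd_comm (x y : ℕ) : sd x y = sd y x := by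
  unfold sd
  split_ifs with h1 h2 h3 h4 h5 <;> omega

lemma sd_le (x y : ℕ) : sd x y ≤ 2 := by unfold sd; split_ifs <;> omega

/-- the radio labeling on ℕ coordinates -/
def rlab (m n i j : ℕ) : ℕ :=
  if i = 0 then (if j = 0 then 0 else (m-1)*(n+3) + n + 4 + 3*j)
  else if j = 0 then (i-1)*(n+3) + n + 4
  else 3 + ((i + m - j) % m) * (n+3) + (j-1)

lemma rlab_z (m n : ℕ) : rlab m n 0 0 = 0 := by simp [rlab]
lemma rlab_x (m n i : ℕ) (hi : i ≠ 0) : rlab m n i 0 = (i-1)*(n+3) + n + 4 := by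
  simp [rlab, hi]
lemma rlab_y (m n j : ℕ) (hj : j ≠ 0) : rlab m n 0 j = (m-1)*(n+3) + n + 4 + 3*j := by
  simp [rlab, hj]
lemma rlab_u (m n i j : ℕ) (hi : i ≠ 0) (hj : j ≠ 0) :
    rlab m n i j = 3 + ((i + m - j) % m) * (n+3) + (j-1) := by
  simp [rlab, hi, hj]

lemma eq_of_mod_eq' {m a b : ℕ} (h : a % m = b % m) (h1 : a ≤ b) (h2 : b < a + m) : a = b := by
  have hd : m ∣ b - a := (Nat.modEq_iff_dvd' h1).mp h
  by_contra hne
  have hpos : 0 < b - a := by omega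
  have := Nat.le_of_dvd hpos hd
  omega

lemma qlt {m : ℕ} (hm : 0 < m) (a : ℕ) : a % m < m := Nat.mod_lt _ hm

/-- row recovery: the row of the u-vertex (i,j) from its block index q -/
lemma qrow (m i j : ℕ) (h1 : 1 ≤ i) (h2 : i ≤ m) (h3 : 1 ≤ j) (h4 : j ≤ m) :
    ((i + m - j) % m + (j - 1)) % m = i - 1 := by
  rw [Nat.mod_add_mod]
  have he : (i + m - j) + (j - 1) = (i - 1) + m := by omega
  rw [he, Nat.add_mod_right, Nat.mod_eq_of_lt (by omega)]

/-- if two u-vertices in the same diagonal block share a row, they coincide -/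
lemma q_inj_j {m i j j' : ℕ} (h1 : 1 ≤ i) (h2 : i ≤ m) (h3 : 1 ≤ j) (h4 : j ≤ m)
    (h5 : 1 ≤ j') (h6 : j' ≤ m) (hq : (i + m - j) % m = (i + m - j') % m) : j = j' := by
  rcases le_total j j' with h | h
  · have := eq_of_mod_eq' hq.symm (by omega : i + m - j' ≤ i + m - j) (by omega)
    omega
  · have := eq_of_mod_eq' hq (by omega : i + m - j ≤ i + m - j') (by omega)
    omega

lemma xu_case (m n : ℕ) (hn : 3 ≤ n) (hmn : n ≤ m) (a i j : ℕ)
    (ha1 : 1 ≤ a) (ha : a ≤ m) (hi1 : 1 ≤ i) (hi : i ≤ m) (hj1 : 1 ≤ j) (hj : j ≤ n) :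
    (5 : ℤ) - ((sd a i : ℤ) + sd 0 j) ≤ |(rlab m n a 0 : ℤ) - rlab m n i j| := by
  have hm : 3 ≤ m := hn.trans hmn
  have hsdj : sd 0 j = 1 := by unfold sd; simp; omega
  rw [hsdj]
  set q := (i + m - j) % m with hqdef
  have hq : q < m := qlt (by omega) _
  have hjz : (1:ℤ) ≤ (j:ℤ) := by exact_mod_cast hj1
  have hjn : (j:ℤ) ≤ (n:ℤ) := by exact_mod_cast hj
  have hd : (rlab m n a 0 : ℤ) - rlab m n i j
      = ((a:ℤ) - 1 - q) * ((n:ℤ)+3) + ((n:ℤ) + 2 - (j:ℤ)) := by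
    rw [rlab_x m n a (by omega), rlab_u m n i j (by omega) (by omega), ← hqdef]
    push_cast [Nat.cast_sub (show 1 ≤ a by omega), Nat.cast_sub (show 1 ≤ j by omega)]
    ring
  have hsame : a = i → ¬ (a - 1 = q ∧ 2 ≤ j) ∧ ¬ (q = a ∧ (j < n ∨ n < m)) := by
    intro hai
    subst hai
    constructor
    · rintro ⟨h1, h2⟩
      have hmod : (a - 1) % m = (a + m - j) % m := by
        rw [Nat.mod_eq_of_lt (show a - 1 < m by omega)]
        exact_mod_cast h1
      have := eq_of_mod_eq' hmod (by omega) (by omega)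
      omega
    · rintro ⟨h1, h2⟩
      have haml : a < m := by omega
      have hmod : a % m = (a + m - j) % m := by
        rw [Nat.mod_eq_of_lt haml]
        exact h1.symm
      have := eq_of_mod_eq' hmod (by omega) (by omega)
      omega
  rcases lt_trichotomy (a - 1) q with hlt | heq | hgt
  · -- a - 1 < q : U label is bigger
    have haq : (a:ℤ) - 1 - q ≤ -1 := by
      have : (a:ℤ) - 1 < (q:ℤ) := by
        have h' : a - 1 < q := hlt
        have := (Nat.cast_lt (α := ℤ)).2 h'
        push_cast [Nat.cast_sub (show 1 ≤ a by omega)] at this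
        omega
      omega
    rcases (show q = a ∨ a + 1 ≤ q by omega) with h1 | h1
    · -- q = (a-1) + 1
      have hqz : (q:ℤ) = (a:ℤ) := by exact_mod_cast h1
      have habs : |(rlab m n a 0 : ℤ) - rlab m n i j| = (j:ℤ) + 1 := by
        rw [hd, abs_of_nonpos (by nlinarith), hqz]
        ring
      rw [habs]
      by_cases hai : a = i
      · have hforced := (hsame hai).2
        have hjnm : j = n ∧ n = m := by
          by_contra hcon
          exact hforced ⟨h1, by omega⟩
        have hsd0 : sd a i = 0 := by unfold sd; simp [hai]
        rw [hsd0]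
        push_cast
        omega
      · have hsd2 : sd a i = 2 := by unfold sd; split_ifs <;> omega
        rw [hsd2]
        push_cast
        omega
    · -- q ≥ a + 1
      have hbig : (q:ℤ) - ((a:ℤ) - 1) ≥ 2 := by
        have : (a:ℤ) + 1 ≤ (q:ℤ) := by exact_mod_cast h1
        omega
      have hnn : (rlab m n a 0 : ℤ) - rlab m n i j ≤ -4 := by
        rw [hd]; nlinarith
      have h4 : (4:ℤ) ≤ |(rlab m n a 0 : ℤ) - rlab m n i j| := by
        rw [abs_of_nonpos (by omega)]; omega
      have : (0:ℤ) ≤ sd a i := by positivity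
      omega
  · -- a - 1 = q : same diagonal block
    have hqz : (q:ℤ) = (a:ℤ) - 1 := by
      have := congrArg (fun t : ℕ => (t:ℤ)) heq
      push_cast [Nat.cast_sub (show 1 ≤ a by omega)] at this
      omega
    have habs : |(rlab m n a 0 : ℤ) - rlab m n i j| = (n:ℤ) + 2 - j := by
      rw [hd, abs_of_nonneg (by nlinarith), hqz]
      ring
    rw [habs]
    by_cases hai : a = i
    · have hj1' : j = 1 := by
        have := (hsame hai).1
        by_contra hcon
        exact this ⟨heq, by omega⟩
      have hsd0 : sd a i = 0 := by unfold sd; simp [hai]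
      rw [hsd0]
      subst hj1'
      push_cast
      omega
    · have hsd2 : sd a i = 2 := by unfold sd; split_ifs <;> omega
      rw [hsd2]
      omega
  · -- a - 1 > q : X label bigger by ≥ n+5
    have hbig : ((a:ℤ) - 1 - q) ≥ 1 := by
      have h' := (Nat.cast_lt (α := ℤ)).2 hgt
      push_cast [Nat.cast_sub (show 1 ≤ a by omega)] at h'
      omega
    have hnn : (rlab m n a 0 : ℤ) - rlab m n i j ≥ 4 := by
      rw [hd]; nlinarith
    have h4 : (4:ℤ) ≤ |(rlab m n a 0 : ℤ) - rlab m n i j| := by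
      rw [abs_of_nonneg (by omega)]; omega
    have : (0:ℤ) ≤ sd a i := by positivity
    omega

lemma uu_case (m n : ℕ) (hn : 3 ≤ n) (hmn : n ≤ m) (i j i' j' : ℕ)
    (hi1 : 1 ≤ i) (hi : i ≤ m) (hj1 : 1 ≤ j) (hj : j ≤ n)
    (hi1' : 1 ≤ i') (hi' : i' ≤ m) (hj1' : 1 ≤ j') (hj' : j' ≤ n)
    (hne : ¬(i = i' ∧ j = j')) :
    (5 : ℤ) - ((sd i i' : ℤ) + sd j j') ≤ |(rlab m n i j : ℤ) - rlab m n i' j'| := by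
  have hm : 3 ≤ m := hn.trans hmn
  set q := (i + m - j) % m with hqdef
  set q' := (i' + m - j') % m with hq'def
  have hq : q < m := qlt (by omega) _
  have hq' : q' < m := qlt (by omega) _
  have hd : (rlab m n i j : ℤ) - rlab m n i' j'
      = ((q:ℤ) - q') * ((n:ℤ)+3) + ((j:ℤ) - j') := by
    rw [rlab_u m n i j (by omega) (by omega), rlab_u m n i' j' (by omega) (by omega),
      ← hqdef, ← hq'def]
    push_cast [Nat.cast_sub (show 1 ≤ j by omega), Nat.cast_sub (show 1 ≤ j' by omega)]
    ring
  by_cases hqq : q = q'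
  · have hji : j = j' → i = i' := by
      intro h
      subst h
      have r1 := qrow m i j (by omega) (by omega) (by omega) (by omega)
      have r2 := qrow m i' j (by omega) (by omega) (by omega) (by omega)
      rw [← hqdef] at r1
      rw [← hq'def] at r2
      rw [hqq] at r1
      omega
    have hjj : j ≠ j' := fun h => hne ⟨hji h, h⟩
    have hii : i ≠ i' := by
      intro h
      have hqq2 : (i + m - j) % m = (i + m - j') % m := by
        have h2 : q = q' := hqq
        rw [hqdef] at h2
        rw [hq'def] at h2
        rw [← h] at h2
        exact h2
      exact hjj (q_inj_j (by omega) (by omega) (by omega) (by omega) (by omega) (by omega) hqq2)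
    have hsd1 : sd i i' = 2 := by unfold sd; split_ifs <;> omega
    have hsd2 : sd j j' = 2 := by unfold sd; split_ifs <;> omega
    rw [hsd1, hsd2, hd]
    have hqz : (q:ℤ) = (q':ℤ) := by exact_mod_cast hqq
    have heq2 : ((q:ℤ) - q') * ((n:ℤ)+3) + ((j:ℤ) - j') = (j:ℤ) - j' := by
      rw [hqz]; ring
    rw [heq2]
    have hjz : (j:ℤ) ≠ (j':ℤ) := by exact_mod_cast hjj
    rcases abs_cases ((j:ℤ) - (j':ℤ)) with ⟨h1, h2⟩ | ⟨h1, h2⟩ <;> omega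
  · -- different blocks
    have hsd : (2:ℤ) ≤ (sd i i' : ℤ) + sd j j' := by
      have h1 : (0:ℤ) ≤ sd i i' := by positivity
      have h2 : (0:ℤ) ≤ sd j j' := by positivity
      rcases not_and_or.mp hne with h | h
      · have : sd i i' = 2 := by unfold sd; split_ifs <;> omega
        rw [this]; push_cast; omega
      · have : sd j j' = 2 := by unfold sd; split_ifs <;> omega
        rw [this]; push_cast; omega
    have hjb : (1:ℤ) - n ≤ (j:ℤ) - j' ∧ (j:ℤ) - j' ≤ (n:ℤ) - 1 := by
      constructor <;>
      · have c1 : (1:ℤ) ≤ (j:ℤ) := by exact_mod_cast hj1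
        have c2 : (j:ℤ) ≤ n := by exact_mod_cast hj
        have c3 : (1:ℤ) ≤ (j':ℤ) := by exact_mod_cast hj1'
        have c4 : (j':ℤ) ≤ n := by exact_mod_cast hj'
        omega
    have h4 : (4:ℤ) ≤ |(rlab m n i j : ℤ) - rlab m n i' j'| := by
      rcases lt_or_gt_of_ne hqq with h | h
      · have hb : (q:ℤ) - q' ≤ -1 := by
          have : (q:ℤ) < q' := by exact_mod_cast h
          omega
        have : (rlab m n i j : ℤ) - rlab m n i' j' ≤ -4 := by
          rw [hd]; nlinarith [hjb.1, hjb.2]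
        rw [abs_of_nonpos (by omega)]; omega
      · have hb : (1:ℤ) ≤ (q:ℤ) - q' := by
          have : (q':ℤ) < q := by exact_mod_cast h
          omega
        have : (4:ℤ) ≤ (rlab m n i j : ℤ) - rlab m n i' j' := by
          rw [hd]; nlinarith [hjb.1, hjb.2]
        rw [abs_of_nonneg (by omega)]; omega
    omega

lemma xy_case (m n a b : ℕ) (hn : 3 ≤ n) (hmn : n ≤ m)
    (ha1 : 1 ≤ a) (ha : a ≤ m) (hb1 : 1 ≤ b) (hb : b ≤ n) :
    (3:ℤ) ≤ |(rlab m n a 0 : ℤ) - rlab m n 0 b| := by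
  have hd : (rlab m n 0 b : ℤ) - rlab m n a 0
      = (((m-1 : ℕ):ℤ) - ((a-1 : ℕ):ℤ)) * ((n:ℤ)+3) + 3*(b:ℤ) := by
    rw [rlab_x m n a (by omega), rlab_y m n b (by omega)]
    push_cast
    ring
  have hma : ((a-1 : ℕ):ℤ) ≤ ((m-1 : ℕ):ℤ) := by
    have : a - 1 ≤ m - 1 := by omega
    exact_mod_cast this
  have hbz : (1:ℤ) ≤ (b:ℤ) := by exact_mod_cast hb1
  have h3 : (3:ℤ) ≤ (rlab m n 0 b : ℤ) - rlab m n a 0 := by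
    rw [hd]; nlinarith
  rw [abs_sub_comm, abs_of_nonneg (by omega)]
  omega

lemma yu_case (m n b i j : ℕ) (hn : 3 ≤ n) (hmn : n ≤ m)
    (hb1 : 1 ≤ b) (hb : b ≤ n) (hi1 : 1 ≤ i) (hi : i ≤ m) (hj1 : 1 ≤ j) (hj : j ≤ n) :
    (5:ℤ) - ((sd 0 i : ℤ) + sd b j) ≤ |(rlab m n 0 b : ℤ) - rlab m n i j| := by
  have hm : 3 ≤ m := hn.trans hmn
  set q := (i + m - j) % m with hqdef
  have hq : q < m := qlt (by omega) _
  have hd : (rlab m n 0 b : ℤ) - rlab m n i j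
      = (((m-1 : ℕ):ℤ) - (q:ℤ)) * ((n:ℤ)+3) + ((n:ℤ) + 2 - (j:ℤ)) + 3*(b:ℤ) := by
    rw [rlab_y m n b (by omega), rlab_u m n i j (by omega) (by omega), ← hqdef]
    push_cast [Nat.cast_sub (show 1 ≤ j by omega)]
    ring
  have hmq : (q:ℤ) ≤ ((m-1 : ℕ):ℤ) := by
    have : q ≤ m - 1 := by omega
    exact_mod_cast this
  have hbz : (1:ℤ) ≤ (b:ℤ) := by exact_mod_cast hb1
  have hjn : (j:ℤ) ≤ (n:ℤ) := by exact_mod_cast hj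
  have h5 : (5:ℤ) ≤ (rlab m n 0 b : ℤ) - rlab m n i j := by
    rw [hd]; nlinarith
  have hs1 : sd 0 i = 1 := by unfold sd; split_ifs <;> omega
  have hs2 : (0:ℤ) ≤ sd b j := by positivity
  rw [hs1, abs_of_nonneg (by omega)]
  push_cast
  omega

lemma master (m n : ℕ) (hn : 3 ≤ n) (hmn : n ≤ m) (i j i' j' : ℕ)
    (hi : i ≤ m) (hj : j ≤ n) (hi' : i' ≤ m) (hj' : j' ≤ n)
    (hne : ¬(i = i' ∧ j = j')) :
    (5 : ℤ) - ((sd i i' : ℤ) + sd j j') ≤ |(rlab m n i j : ℤ) - rlab m n i' j'| := by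
  have hm : 3 ≤ m := hn.trans hmn
  by_cases hi0 : i = 0 <;> by_cases hj0 : j = 0 <;>
    by_cases hi0' : i' = 0 <;> by_cases hj0' : j' = 0
  -- (1) z z
  · exact absurd ⟨by omega, by omega⟩ hne
  -- (2) z y
  · subst hi0; subst hj0; subst hi0'
    have hs1 : sd 0 0 = 0 := by unfold sd; simp
    have hs2 : sd 0 j' = 1 := by unfold sd; split_ifs <;> omega
    rw [hs1, hs2, rlab_z, rlab_y m n j' (by omega)]
    rw [abs_sub_comm, Nat.cast_zero, sub_zero, abs_of_nonneg (by positivity)]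
    push_cast
    have : (0:ℤ) ≤ ((m-1:ℕ):ℤ) * ((n:ℤ)+3) := by positivity
    have hj'z : (1:ℤ) ≤ (j':ℤ) := by exact_mod_cast Nat.one_le_iff_ne_zero.2 hj0'
    omega
  -- (3) z x
  · subst hi0; subst hj0; subst hj0'
    have hs1 : sd 0 i' = 1 := by unfold sd; split_ifs <;> omega
    have hs2 : sd 0 0 = 0 := by unfold sd; simp
    rw [hs1, hs2, rlab_z, rlab_x m n i' (by omega)]
    rw [abs_sub_comm, Nat.cast_zero, sub_zero, abs_of_nonneg (by positivity)]
    push_cast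
    have : (0:ℤ) ≤ ((i'-1:ℕ):ℤ) * ((n:ℤ)+3) := by positivity
    omega
  -- (4) z u
  · subst hi0; subst hj0
    have hs1 : sd 0 i' = 1 := by unfold sd; split_ifs <;> omega
    have hs2 : sd 0 j' = 1 := by unfold sd; split_ifs <;> omega
    rw [hs1, hs2, rlab_z, rlab_u m n i' j' hi0' hj0']
    rw [abs_sub_comm, Nat.cast_zero, sub_zero, abs_of_nonneg (by positivity)]
    have h3 : (3:ℕ) ≤ 3 + (i'+m-j') % m * (n+3) + (j'-1) :=
      le_trans (Nat.le_add_right _ _) (Nat.le_add_right _ _)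
    norm_num
    exact_mod_cast h3
  -- (5) y z
  · subst hi0; subst hi0'; subst hj0'
    have hs1 : sd 0 0 = 0 := by unfold sd; simp
    have hs2 : sd j 0 = 1 := by unfold sd; split_ifs <;> omega
    rw [hs1, hs2, rlab_z, rlab_y m n j (by omega)]
    rw [Nat.cast_zero, sub_zero, abs_of_nonneg (by positivity)]
    push_cast
    have : (0:ℤ) ≤ ((m-1:ℕ):ℤ) * ((n:ℤ)+3) := by positivity
    have hjz : (1:ℤ) ≤ (j:ℤ) := by exact_mod_cast Nat.one_le_iff_ne_zero.2 hj0
    omega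
  -- (6) y y
  · subst hi0; subst hi0'
    have hs1 : sd 0 0 = 0 := by unfold sd; simp
    have hs2 : sd j j' = 2 := by unfold sd; split_ifs <;> omega
    rw [hs1, hs2]
    have hd : (rlab m n 0 j : ℤ) - rlab m n 0 j' = 3*(j:ℤ) - 3*(j':ℤ) := by
      rw [rlab_y m n j (by omega), rlab_y m n j' (by omega)]
      push_cast
      ring
    rw [hd]
    have : (j:ℤ) ≠ (j':ℤ) := by
      intro h
      exact hne ⟨rfl, by exact_mod_cast h⟩
    rcases abs_cases (3*(j:ℤ) - 3*(j':ℤ)) with ⟨h1, h2⟩ | ⟨h1, h2⟩ <;> omega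
  -- (7) y x
  · subst hi0; subst hj0'
    have hs1 : sd 0 i' = 1 := by unfold sd; split_ifs <;> omega
    have hs2 : sd j 0 = 1 := by unfold sd; split_ifs <;> omega
    rw [hs1, hs2, abs_sub_comm]
    have := xy_case m n i' j hn hmn (by omega) hi' (by omega) hj
    omega
  -- (8) y u
  · subst hi0
    have := yu_case m n j i' j' hn hmn (by omega) hj (by omega) hi' (by omega) hj'
    omega
  -- (9) x z
  · subst hj0; subst hi0'; subst hj0'
    have hs1 : sd i 0 = 1 := by unfold sd; split_ifs <;> omega
    have hs2 : sd 0 0 = 0 := by unfold sd; simp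
    rw [hs1, hs2, rlab_z, rlab_x m n i (by omega)]
    rw [Nat.cast_zero, sub_zero, abs_of_nonneg (by positivity)]
    push_cast
    have : (0:ℤ) ≤ ((i-1:ℕ):ℤ) * ((n:ℤ)+3) := by positivity
    omega
  -- (10) x y
  · subst hj0; subst hi0'
    have hs1 : sd i 0 = 1 := by unfold sd; split_ifs <;> omega
    have hs2 : sd 0 j' = 1 := by unfold sd; split_ifs <;> omega
    rw [hs1, hs2]
    have := xy_case m n i j' hn hmn (by omega) hi (by omega) hj'
    omega
  -- (11) x x
  · subst hj0; subst hj0'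
    have hii : i ≠ i' := fun h => hne ⟨h, rfl⟩
    have hs1 : sd i i' = 2 := by unfold sd; split_ifs <;> omega
    have hs2 : sd 0 0 = 0 := by unfold sd; simp
    rw [hs1, hs2]
    have hd : (rlab m n i 0 : ℤ) - rlab m n i' 0
        = (((i-1:ℕ):ℤ) - ((i'-1:ℕ):ℤ)) * ((n:ℤ)+3) := by
      rw [rlab_x m n i (by omega), rlab_x m n i' (by omega)]
      push_cast
      ring
    rw [hd]
    have hne2 : ((i-1:ℕ):ℤ) ≠ ((i'-1:ℕ):ℤ) := by
      intro h
      have : i - 1 = i' - 1 := by exact_mod_cast h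
      omega
    have hnz : (3:ℤ) ≤ |((i-1:ℕ):ℤ) - ((i'-1:ℕ):ℤ)| * ((n:ℤ)+3) := by
      have h1 : (1:ℤ) ≤ |((i-1:ℕ):ℤ) - ((i'-1:ℕ):ℤ)| := by
        rcases abs_cases (((i-1:ℕ):ℤ) - ((i'-1:ℕ):ℤ)) with ⟨h1, h2⟩ | ⟨h1, h2⟩ <;> omega
      nlinarith
    rw [abs_mul, abs_of_nonneg (show (0:ℤ) ≤ (n:ℤ)+3 by positivity)]
    omega
  -- (12) x u
  · subst hj0
    have := xu_case m n hn hmn i i' j' (by omega) hi (by omega) hi' (by omega) hj'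
    omega
  -- (13) u z
  · subst hi0'; subst hj0'
    have hs1 : sd i 0 = 1 := by unfold sd; split_ifs <;> omega
    have hs2 : sd j 0 = 1 := by unfold sd; split_ifs <;> omega
    rw [hs1, hs2, rlab_z, rlab_u m n i j hi0 hj0]
    rw [Nat.cast_zero, sub_zero, abs_of_nonneg (by positivity)]
    have h3 : (3:ℕ) ≤ 3 + (i+m-j) % m * (n+3) + (j-1) :=
      le_trans (Nat.le_add_right _ _) (Nat.le_add_right _ _)
    norm_num
    exact_mod_cast h3
  -- (14) u y
  · subst hi0'
    have h := yu_case m n j' i j hn hmn (by omega) hj' (by omega) hi (by omega) hj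
    rw [abs_sub_comm] at h
    have hc1 : sd i 0 = sd 0 i := sd_comm _ _
    have hc2 : sd j j' = sd j' j := sd_comm _ _
    rw [hc1, hc2]
    omega
  -- (15) u x
  · subst hj0'
    have h := xu_case m n hn hmn i' i j (by omega) hi' (by omega) hi (by omega) hj
    rw [abs_sub_comm] at h
    have hc1 : sd i i' = sd i' i := sd_comm _ _
    have hc2 : sd j 0 = sd 0 j := sd_comm _ _
    rw [hc1, hc2]
    omega
  -- (16) u u
  · exact uu_case m n hn hmn i j i' j' (by omega) hi (by omega) hj (by omega) hi'
      (by omega) hj' hne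

lemma star_dist_val (N : ℕ) (x y : Fin (N+1)) :
    (starGraphK N).dist x y = sd x.val y.val := by
  rw [star_dist]
  simp only [sd, Fin.ext_iff, Fin.val_zero]

lemma prod_dist (m n : ℕ) (u v : Fin (m+1) × Fin (n+1)) :
    (starGraphK m □ starGraphK n).dist u v = sd u.1.val v.1.val + sd u.2.val v.2.val := by
  rw [boxProd_dist (star_connected m) (star_connected n), star_dist_val, star_dist_val]

lemma diam4 (m n : ℕ) (hm : 2 ≤ m) (hn : 2 ≤ n) :
    graphDiam (starGraphK m □ starGraphK n) = 4 := by
  apply le_antisymm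
  · apply Finset.sup_le
    intro p _
    rw [prod_dist]
    have h1 := sd_le p.1.1.val p.2.1.val
    have h2 := sd_le p.1.2.val p.2.2.val
    omega
  · have hpair : (starGraphK m □ starGraphK n).dist (⟨1, by omega⟩, ⟨1, by omega⟩)
        ((⟨2, by omega⟩ : Fin (m+1)), (⟨2, by omega⟩ : Fin (n+1))) = 4 := by
      rw [prod_dist]
      norm_num [sd]
    unfold graphDiam
    exact le_trans (le_of_eq hpair.symm)
      (Finset.le_sup (f := fun p : (Fin (m+1) × Fin (n+1)) × (Fin (m+1) × Fin (n+1)) =>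
          (starGraphK m □ starGraphK n).dist p.1 p.2)
        (Finset.mem_univ (((⟨1, by omega⟩ : Fin (m+1)), (⟨1, by omega⟩ : Fin (n+1))),
          ((⟨2, by omega⟩ : Fin (m+1)), (⟨2, by omega⟩ : Fin (n+1))))))

lemma sum_sd (N : ℕ) : ∑ a : Fin (N+1), sd a.val 0 = N := by
  rw [Fin.sum_univ_succ]
  have h1 : sd (0 : Fin (N+1)).val 0 = 0 := by simp [sd]
  have h2 : ∀ i : Fin N, sd ((i : ℕ) + 1) 0 = 1 := by
    intro i
    simp [sd]
  rw [h1]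
  simp [Fin.val_succ, h2]

lemma sum_dist (m n : ℕ) :
    ∑ u : Fin (m+1) × Fin (n+1), (starGraphK m □ starGraphK n).dist u (0, 0)
      = (n+1) * m + (m+1) * n := by
  have h : ∀ u : Fin (m+1) × Fin (n+1), (starGraphK m □ starGraphK n).dist u (0,0)
      = sd u.1.val 0 + sd u.2.val 0 := by
    intro u
    rw [prod_dist]
    simp
  simp_rw [h]
  rw [Finset.sum_add_distrib]
  have h1 : ∑ u : Fin (m+1) × Fin (n+1), sd u.1.val 0 = (n+1) * m := by
    rw [Fintype.sum_prod_type]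
    have hc : ∀ a : Fin (m+1), ∑ _b : Fin (n+1), sd a.val 0 = (n+1) * sd a.val 0 := by
      intro a
      rw [Finset.sum_const, Finset.card_univ, Fintype.card_fin, smul_eq_mul]
    simp_rw [hc]
    rw [← Finset.mul_sum, sum_sd]
  have h2 : ∑ u : Fin (m+1) × Fin (n+1), sd u.2.val 0 = (m+1) * n := by
    rw [Fintype.sum_prod_type]
    simp_rw [sum_sd n]
    rw [Finset.sum_const, Finset.card_univ, Fintype.card_fin, smul_eq_mul]
  rw [h1, h2]

lemma rlab_le (m n : ℕ) (hn : 3 ≤ n) (hmn : n ≤ m) (i j : ℕ) (hi : i ≤ m) (hj : j ≤ n) :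
    rlab m n i j ≤ m*n + 3*(m+n) + 1 := by
  have hm : 3 ≤ m := hn.trans hmn
  obtain ⟨M, rfl⟩ : ∃ M, m = M + 1 := ⟨m - 1, by omega⟩
  unfold rlab
  split_ifs with h1 h2 h3
  · exact Nat.zero_le _
  · simp only [Nat.add_sub_cancel]
    nlinarith [hj]
  · have hle : (i-1) ≤ M := by omega
    have h4 : (i-1)*(n+3) ≤ M*(n+3) := Nat.mul_le_mul_right _ hle
    nlinarith [h4]
  · obtain ⟨J, rfl⟩ : ∃ J, j = J + 1 := ⟨j - 1, by omega⟩
    have hq : (i + (M+1) - (J+1)) % (M+1) ≤ M := by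
      have := Nat.mod_lt (i + (M+1) - (J+1)) (show 0 < M+1 by omega)
      omega
    have h4 : ((i + (M+1) - (J+1)) % (M+1))*(n+3) ≤ M*(n+3) := Nat.mul_le_mul_right _ hq
    simp only [Nat.add_sub_cancel]
    nlinarith [h4, hj]

lemma is_radio (m n : ℕ) (hn : 3 ≤ n) (hmn : n ≤ m) :
    IsRadioLabeling (starGraphK m □ starGraphK n)
      (fun w => rlab m n w.1.val w.2.val) := by
  intro u v huv
  have hm : 3 ≤ m := hn.trans hmn
  rw [diam4 m n (by omega) (by omega), prod_dist]
  have hne : ¬(u.1.val = v.1.val ∧ u.2.val = v.2.val) := by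
    rintro ⟨h1, h2⟩
    exact huv (Prod.ext (Fin.ext h1) (Fin.ext h2))
  have hb1 : u.1.val ≤ m := Nat.lt_succ_iff.mp u.1.isLt
  have hb2 : u.2.val ≤ n := Nat.lt_succ_iff.mp u.2.isLt
  have hb3 : v.1.val ≤ m := Nat.lt_succ_iff.mp v.1.isLt
  have hb4 : v.2.val ≤ n := Nat.lt_succ_iff.mp v.2.isLt
  have hkey := master m n hn hmn u.1.val u.2.val v.1.val v.2.val hb1 hb2 hb3 hb4 hne
  push_cast
  push_cast at hkey
  linarith

lemma span_le (m n : ℕ) (hn : 3 ≤ n) (hmn : n ≤ m) :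
    radioSpan (fun w : Fin (m+1) × Fin (n+1) => rlab m n w.1.val w.2.val)
      ≤ m*n + 3*(m+n) + 1 := by
  apply Finset.sup_le
  intro p _
  have h1 := rlab_le m n hn hmn p.1.1.val p.1.2.val
    (Nat.lt_succ_iff.mp p.1.1.isLt) (Nat.lt_succ_iff.mp p.1.2.isLt)
  have h2 := rlab_le m n hn hmn p.2.1.val p.2.2.val
    (Nat.lt_succ_iff.mp p.2.1.isLt) (Nat.lt_succ_iff.mp p.2.2.isLt)
  show (((rlab m n p.1.1.val p.1.2.val : ℕ) : ℤ)
    - ((rlab m n p.2.1.val p.2.2.val : ℕ) : ℤ)).natAbs ≤ m*n + 3*(m+n) + 1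
  omega

end RadioAux

/-- rn(K_{1,m} □ K_{1,n}) = mn + 3(m + n) + 1 for m ≥ n ≥ 3. -/
theorem stmt_12 (m n : ℕ) (hn : 3 ≤ n) (hmn : n ≤ m) :
    radioNumber (starGraphK m □ starGraphK n) = m * n + 3 * (m + n) + 1 := by
  have hm : 3 ≤ m := hn.trans hmn
  have hcard : Fintype.card (Fin (m+1) × Fin (n+1)) = (m+1)*(n+1) := by simp
  have hconn : (starGraphK m □ starGraphK n).Connected :=
    (star_connected m).boxProd (star_connected n)
  have hlb : ∀ s ∈ {s | ∃ f : Fin (m+1) × Fin (n+1) → ℕ,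
      IsRadioLabeling (starGraphK m □ starGraphK n) f ∧ s = radioSpan f},
      m * n + 3 * (m + n) + 1 ≤ s := by
    rintro s ⟨f, hf, rfl⟩
    have h := radio_lower (starGraphK m □ starGraphK n) hconn
      (by rw [hcard]; nlinarith) (0,0) f hf
    rw [diam4 m n (by omega) (by omega), hcard, sum_dist] at h
    have hexp : (m+1)*(n+1) - 1 = m*n + m + n := by
      have : (m+1)*(n+1) = m*n + m + n + 1 := by ring
      omega
    rw [hexp] at h
    nlinarith [h]
  have hmem : radioSpan (fun w : Fin (m+1) × Fin (n+1) => rlab m n w.1.val w.2.val) ∈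
      {s | ∃ f : Fin (m+1) × Fin (n+1) → ℕ,
        IsRadioLabeling (starGraphK m □ starGraphK n) f ∧ s = radioSpan f} :=
    ⟨_, is_radio m n hn hmn, rfl⟩
  have h1 : radioNumber (starGraphK m □ starGraphK n) ≤
      radioSpan (fun w : Fin (m+1) × Fin (n+1) => rlab m n w.1.val w.2.val) :=
    Nat.sInf_le hmem
  have h2 : m * n + 3 * (m + n) + 1 ≤ radioNumber (starGraphK m □ starGraphK n) :=
    le_csInf ⟨_, hmem⟩ hlb
  have h3 := span_le m n hn hmn
  have h4 := hlb _ hmem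
  omega
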